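/- arXiv:2106.09136 — 5 statements merged into one kernel-verified Lean document; each statement's English description precedes it below -/
import Mathlib

section
/- For any fixed function f and any loss ℓ, the conditional expectation of the corrupted empirical risk given the clean data equals (1−2ρ) times the penalized empirical risk: E[L̃ₙ^ρ(f) | (Xᵢ,Yᵢ)ᵢ] = (1−2ρ)(L̂ₙ(f) + λ R̂ₙ(f)), where λ = 2ρ/(1−2ρ). -/
open MeasureTheory ProbabilityTheory

lemma aux_two_point {Ω : Type*} [MeasurableSpace Ω] (μ : Measure Ω) [IsProbabilityMeasure μ]
    (ℓ : ℝ → ℝ) (c yv ρ : ℝ) (Y : Ω → ℝ) (hyv : yv = 1 ∨ yv = -1)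
    (hval : ∀ ω, Y ω = yv ∨ Y ω = -yv) (hm : Measurable Y)
    (hρ0 : 0 ≤ ρ) (hρ1 : ρ ≤ 1)
    (hdist : μ {ω | Y ω = -yv} = ENNReal.ofReal ρ) :
    Integrable (fun ω => ℓ (c * Y ω)) μ ∧
      ∫ ω, ℓ (c * Y ω) ∂μ = (1 - ρ) * ℓ (c * yv) + ρ * ℓ (c * (-yv)) := by
  set A : Set Ω := {ω | Y ω = -yv} with hA
  have hymem : yv ≠ -yv := by rcases hyv with h | h <;> rw [h] <;> norm_num
  have hAmeas : MeasurableSet A := hm (measurableSet_singleton (-yv))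
  have hfun : (fun ω => ℓ (c * Y ω))
      = fun ω => A.indicator (fun _ => ℓ (c * (-yv))) ω
          + Aᶜ.indicator (fun _ => ℓ (c * yv)) ω := by
    funext ω
    rcases hval ω with h | h
    · have hω : ω ∉ A := by simp [hA, h]; exact hymem
      rw [Set.indicator_of_notMem hω, Set.indicator_of_mem (Set.mem_compl hω), h, zero_add]
    · have hω : ω ∈ A := h
      rw [Set.indicator_of_mem hω, Set.indicator_of_notMem (by simp [hω]), h, add_zero]
  have hi1 : Integrable (fun ω => A.indicator (fun _ => ℓ (c * (-yv))) ω) μ :=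
    (integrable_const _).indicator hAmeas
  have hi2 : Integrable (fun ω => Aᶜ.indicator (fun _ => ℓ (c * yv)) ω) μ :=
    (integrable_const _).indicator hAmeas.compl
  have hμA : (μ A).toReal = ρ := by rw [hdist]; exact ENNReal.toReal_ofReal hρ0
  have hμAc : (μ Aᶜ).toReal = 1 - ρ := by
    rw [measure_compl hAmeas (measure_ne_top μ A), hdist, measure_univ,
      ENNReal.toReal_sub_of_le (by simpa using hρ1) ENNReal.one_ne_top]
    simp [ENNReal.toReal_ofReal hρ0]
  constructor
  · rw [hfun]; exact hi1.add hi2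
  · rw [hfun, integral_add hi1 hi2, integral_indicator_const _ hAmeas,
      integral_indicator_const _ hAmeas.compl, measureReal_def, measureReal_def, hμA, hμAc]
    simp [mul_comm]
    ring

theorem stmt1 {Ω : Type*} [MeasurableSpace Ω] (μ : Measure Ω) [IsProbabilityMeasure μ]
    {d n : ℕ} (hn : 0 < n) (ℓ : ℝ → ℝ) (f : EuclideanSpace ℝ (Fin d) → ℝ)
    (x : Fin n → EuclideanSpace ℝ (Fin d)) (y : Fin n → ℝ)
    (Ytil : Fin n → Ω → ℝ) (ρ : ℝ) (hρ : ρ ∈ Set.Ioo (0 : ℝ) (1/2))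
    (hy : ∀ i, y i = 1 ∨ y i = -1)
    (hYtilval : ∀ i ω, Ytil i ω = y i ∨ Ytil i ω = - y i)
    (hYtilmeas : ∀ i, Measurable (Ytil i))
    (hYtildist : ∀ i, μ {ω | Ytil i ω = - y i} = ENNReal.ofReal ρ) :
    ∫ ω, (1 / (n : ℝ)) * ∑ i, ℓ (f (x i) * Ytil i ω) ∂μ
      = (1 - 2*ρ) * ((1 / (n : ℝ)) * ∑ i, ℓ (f (x i) * y i)
          + (2*ρ / (1 - 2*ρ)) * ((1 / (n : ℝ)) * ∑ i, (ℓ (f (x i)) + ℓ (- f (x i))) / 2)) := by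
  have hρ0 : 0 ≤ ρ := le_of_lt hρ.1
  have hρ1 : ρ ≤ 1 := le_of_lt (lt_trans hρ.2 (by norm_num))
  have key := fun i => aux_two_point μ ℓ (f (x i)) (y i) ρ (Ytil i) (hy i)
    (fun ω => by simpa using hYtilval i ω) (hYtilmeas i) hρ0 hρ1 (hYtildist i)
  have h2ρ : (1 : ℝ) - 2*ρ ≠ 0 := by
    have := hρ.2; intro h; nlinarith
  rw [integral_const_mul, integral_finset_sum _ (fun i _ => (key i).1)]
  have hsum : ∀ i : Fin n, ∫ ω, ℓ (f (x i) * Ytil i ω) ∂μ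
      = (1 - 2*ρ) * ℓ (f (x i) * y i) + ρ * (ℓ (f (x i)) + ℓ (- f (x i))) := by
    intro i
    rw [(key i).2]
    rcases hy i with h | h <;> rw [h] <;> simp [mul_comm] <;> ring
  rw [Finset.sum_congr rfl (fun i _ => hsum i)]
  rw [Finset.sum_add_distrib, ← Finset.mul_sum, ← Finset.mul_sum]
  rw [show (fun i : Fin n => (ℓ (f (x i)) + ℓ (- f (x i))) / 2) = fun i => (ℓ (f (x i)) + ℓ (- f (x i))) / 2 from rfl, ← Finset.sum_div]
  field_simp
end

section
/- Under Assumptions 1 and 2, the regularizer satisfies max{c_L‖w‖, ℓ(0)} ≤ R(w) ≤ c_U‖w‖ + ℓ(0) for all w ∈ ℝ^d, where one may take c_L = γ log 2 / (4a₂) and c_U = (L/2)√(a₁/a₀). -/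
open MeasureTheory
open scoped InnerProductSpace

private lemma aux_amgm (a₀ s z : ℝ) (ha₀ : 0 < a₀) (hs : 0 < s) :
    |z| ≤ Real.exp (a₀ * z^2) / (2*s*a₀) + s/2 := by
  have h1 : a₀ * z^2 ≤ Real.exp (a₀ * z^2) := by
    nlinarith [Real.add_one_le_exp (a₀ * z^2)]
  have h2 : 2*s*|z| ≤ z^2 + s^2 := by
    nlinarith [sq_nonneg (|z| - s), sq_abs z]
  have h3 : 2*s*a₀*|z| ≤ Real.exp (a₀ * z^2) + a₀ * s^2 := by
    nlinarith [mul_le_mul_of_nonneg_left h2 ha₀.le]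
  have hc : (0:ℝ) < 2*s*a₀ := by positivity
  have h4 : |z| - s/2 ≤ Real.exp (a₀ * z^2) / (2*s*a₀) := by
    rw [le_div_iff₀ hc]
    nlinarith [h3]
  linarith

private lemma aux_tangent (t m z : ℝ) :
    Real.exp (-t*m) * (1 + t*m) - (Real.exp (-t*m) * t) * z ≤ Real.exp (-t*z) := by
  have h1 : (-t*z - (-t*m)) + 1 ≤ Real.exp (-t*z - (-t*m)) := Real.add_one_le_exp _
  have h2 : Real.exp (-t*z) = Real.exp (-t*m) * Real.exp (-t*z - (-t*m)) := by
    rw [← Real.exp_add]; ring_nf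
  rw [h2]
  have h3 := mul_le_mul_of_nonneg_left h1 (Real.exp_pos (-t*m)).le
  nlinarith [h3]

theorem stmt8 {Ω : Type*} [MeasurableSpace Ω] (μ : Measure Ω) [IsProbabilityMeasure μ]
    {d : ℕ} (X : Ω → EuclideanSpace ℝ (Fin d))
    (ℓ : ℝ → ℝ) (Lc γ c₁ c₂ a₀ a₁ a₂ : ℝ)
    (hLc : 0 < Lc) (hγ : 0 < γ) (hc₁ : 0 < c₁) (hc₂ : 0 < c₂)
    (ha₀ : 0 < a₀) (ha₁ : 0 < a₁) (ha₂ : 0 < a₂)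
    (hℓpos : ∀ t, 0 ≤ ℓ t) (hmono : Antitone ℓ) (hconv : ConvexOn ℝ Set.univ ℓ)
    (hlip : LipschitzWith (Real.toNNReal Lc) ℓ)
    (hlow : ∀ t ≤ (0:ℝ), ℓ 0 + γ * |t| ≤ ℓ t)
    (hdecay : ∀ t ≥ (0:ℝ), ℓ t ≤ c₁ * Real.exp (-c₂ * t))
    (hX : AEMeasurable X μ)
    (hIntExp : ∀ u : EuclideanSpace ℝ (Fin d), ‖u‖ = 1 →
      Integrable (fun ω => Real.exp (a₀ * ⟪X ω, u⟫_ℝ^2)) μ)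
    (hexp2 : ∀ u : EuclideanSpace ℝ (Fin d), ‖u‖ = 1 →
      ∫ ω, Real.exp (a₀ * ⟪X ω, u⟫_ℝ^2) ∂μ ≤ a₁)
    (hexpneg : ∀ u : EuclideanSpace ℝ (Fin d), ‖u‖ = 1 → ∀ t > (0:ℝ),
      ∫ ω, Real.exp (-t * |⟪X ω, u⟫_ℝ|) ∂μ ≤ a₂ / t)
    (hIntX : ∀ u : EuclideanSpace ℝ (Fin d), Integrable (fun ω => |⟪X ω, u⟫_ℝ|) μ)
    (hIntR : ∀ w : EuclideanSpace ℝ (Fin d),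
      Integrable (fun ω => (ℓ ⟪X ω, w⟫_ℝ + ℓ (-⟪X ω, w⟫_ℝ)) / 2) μ) :
    ∀ w : EuclideanSpace ℝ (Fin d),
      max (γ * Real.log 2 / (4 * a₂) * ‖w‖) (ℓ 0)
          ≤ ∫ ω, (ℓ ⟪X ω, w⟫_ℝ + ℓ (-⟪X ω, w⟫_ℝ)) / 2 ∂μ ∧
      (∫ ω, (ℓ ⟪X ω, w⟫_ℝ + ℓ (-⟪X ω, w⟫_ℝ)) / 2 ∂μ)
          ≤ (Lc / 2) * Real.sqrt (a₁ / a₀) * ‖w‖ + ℓ 0 := by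
  intro w
  have hℓ0 : 0 ≤ ℓ 0 := hℓpos 0
  -- pointwise convexity bound : ℓ 0 ≤ (ℓ s + ℓ (-s))/2
  have hconvpt : ∀ s : ℝ, ℓ 0 ≤ (ℓ s + ℓ (-s)) / 2 := by
    intro s
    have h := hconv.2 (Set.mem_univ s) (Set.mem_univ (-s))
      (by norm_num : (0:ℝ) ≤ 1/2) (by norm_num : (0:ℝ) ≤ 1/2) (by norm_num)
    have h0 : ((1:ℝ)/2) • s + ((1:ℝ)/2) • (-s) = 0 := by
      simp [smul_eq_mul]
    rw [h0] at h
    simp only [smul_eq_mul] at h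
    linarith
  by_cases hw : w = 0
  · subst hw
    have heq : (∫ ω, (ℓ ⟪X ω, (0 : EuclideanSpace ℝ (Fin d))⟫_ℝ
        + ℓ (-⟪X ω, (0 : EuclideanSpace ℝ (Fin d))⟫_ℝ)) / 2 ∂μ) = ℓ 0 := by
      have hc : ∀ ω, (ℓ ⟪X ω, (0 : EuclideanSpace ℝ (Fin d))⟫_ℝ
          + ℓ (-⟪X ω, (0 : EuclideanSpace ℝ (Fin d))⟫_ℝ)) / 2 = ℓ 0 := by
        intro ω; simp [inner_zero_right]
      rw [integral_congr_ae (Filter.Eventually.of_forall hc)]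
      simp
    rw [heq]
    constructor
    · apply max_le _ le_rfl
      simpa using hℓ0
    · simp
  · -- main case
    have hnw : 0 < ‖w‖ := norm_pos_iff.mpr hw
    obtain ⟨u, hu, hZw⟩ : ∃ u : EuclideanSpace ℝ (Fin d), ‖u‖ = 1 ∧
        ∀ ω, ⟪X ω, w⟫_ℝ = ‖w‖ * ⟪X ω, u⟫_ℝ := by
      refine ⟨‖w‖⁻¹ • w, norm_smul_inv_norm hw, fun ω => ?_⟩
      rw [real_inner_smul_right]
      field_simp
    obtain ⟨m, hmdef⟩ : ∃ m : ℝ, m = ∫ ω, |⟪X ω, u⟫_ℝ| ∂μ := ⟨_, rfl⟩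
    have hm0 : 0 ≤ m := hmdef ▸ integral_nonneg fun ω => abs_nonneg _
    -- measurability
    have hZm : AEMeasurable (fun ω => ⟪X ω, u⟫_ℝ) μ :=
      (continuous_id.inner (continuous_const : Continuous fun _ :
        EuclideanSpace ℝ (Fin d) => u)).measurable.comp_aemeasurable hX
    -- lower bound on m : log 2 / (2 a₂) ≤ m
    have hmlb : Real.log 2 / (2 * a₂) ≤ m := by
      obtain ⟨t, htdef⟩ : ∃ t : ℝ, t = 2 * a₂ := ⟨_, rfl⟩
      have ht : 0 < t := by rw [htdef]; positivity
      have hIexp : Integrable (fun ω => Real.exp (-t * |⟪X ω, u⟫_ℝ|)) μ := by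
        have hmeas : AEStronglyMeasurable (fun ω => Real.exp (-t * |⟪X ω, u⟫_ℝ|)) μ :=
          (Real.measurable_exp.comp_aemeasurable
            ((measurable_abs.comp_aemeasurable hZm).const_mul (-t))).aestronglyMeasurable
        refine (integrable_const (1:ℝ)).mono' hmeas (Filter.Eventually.of_forall fun ω => ?_)
        rw [Real.norm_eq_abs, abs_of_pos (Real.exp_pos _)]
        calc Real.exp (-t * |⟪X ω, u⟫_ℝ|) ≤ Real.exp 0 := by
              apply Real.exp_le_exp.mpr
              have : 0 ≤ t * |⟪X ω, u⟫_ℝ| := mul_nonneg ht.le (abs_nonneg _)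
              linarith
          _ = 1 := Real.exp_zero
      have hintaff : Integrable (fun ω =>
          Real.exp (-t*m) * (1 + t*m) - (Real.exp (-t*m) * t) * |⟪X ω, u⟫_ℝ|) μ :=
        (integrable_const _).sub ((hIntX u).const_mul _)
      have hmono' := integral_mono hintaff hIexp
        (fun ω => aux_tangent t m |⟪X ω, u⟫_ℝ|)
      rw [integral_sub (integrable_const _) ((hIntX u).const_mul _),
        integral_const, integral_const_mul, ← hmdef] at hmono'
      simp only [probReal_univ, ENNReal.toReal_one, one_smul] at hmono'
      have hkey : Real.exp (-t*m) ≤ a₂ / t := by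
        calc Real.exp (-t*m) = Real.exp (-t*m) * (1 + t*m) - Real.exp (-t*m) * t * m := by ring
          _ ≤ ∫ ω, Real.exp (-t * |⟪X ω, u⟫_ℝ|) ∂μ := hmono'
          _ ≤ a₂ / t := hexpneg u hu t ht
      have hhalf : a₂ / t = 1/2 := by rw [htdef]; field_simp
      rw [hhalf] at hkey
      have hlog := Real.log_le_log (Real.exp_pos _) hkey
      rw [Real.log_exp] at hlog
      have hl2 : Real.log (1/2) = -Real.log 2 := by
        rw [one_div, Real.log_inv]
      rw [hl2] at hlog
      rw [← htdef, div_le_iff₀ ht]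
      nlinarith [hlog]
    -- upper bound on m : m ≤ √(a₁/a₀)
    obtain ⟨s, hsdef⟩ : ∃ s : ℝ, s = Real.sqrt (a₁ / a₀) := ⟨_, rfl⟩
    have hs : 0 < s := hsdef ▸ Real.sqrt_pos.mpr (by positivity)
    have hs2 : s^2 = a₁ / a₀ := hsdef ▸ Real.sq_sqrt (by positivity)
    have ha1eq : a₁ = s^2 * a₀ := by
      rw [hs2]; field_simp
    have hmub : m ≤ s := by
      have hc : (0:ℝ) < 2 * s * a₀ := by positivity
      have hintr : Integrable (fun ω =>
          Real.exp (a₀ * ⟪X ω, u⟫_ℝ^2) / (2*s*a₀) + s/2) μ :=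
        ((hIntExp u hu).div_const _).add (integrable_const _)
      have hmono' := integral_mono (hIntX u) hintr
        (fun ω => aux_amgm a₀ s (⟪X ω, u⟫_ℝ) ha₀ hs)
      rw [integral_add ((hIntExp u hu).div_const _) (integrable_const _),
        integral_div, integral_const] at hmono'
      simp only [probReal_univ, ENNReal.toReal_one, one_smul] at hmono'
      have hexpb := hexp2 u hu
      have hfin : a₁ / (2*s*a₀) + s/2 = s := by
        rw [ha1eq]; field_simp; ring
      rw [← hmdef] at hmono'
      calc m ≤ (∫ ω, Real.exp (a₀ * ⟪X ω, u⟫_ℝ^2) ∂μ) / (2*s*a₀) + s/2 := hmono'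
        _ ≤ a₁ / (2*s*a₀) + s/2 := by gcongr
        _ = s := hfin
    -- relation ∫ |⟪X ω, w⟫| = ‖w‖ * m
    have hIw : ∫ ω, |⟪X ω, w⟫_ℝ| ∂μ = ‖w‖ * m := by
      rw [hmdef, ← integral_const_mul]
      apply integral_congr_ae
      apply Filter.Eventually.of_forall
      intro ω
      show |⟪X ω, w⟫_ℝ| = ‖w‖ * |⟪X ω, u⟫_ℝ|
      rw [hZw ω, abs_mul, abs_of_pos hnw]
    -- lower bound 1
    have hptlow : ∀ ω, γ/2 * |⟪X ω, w⟫_ℝ| ≤ (ℓ ⟪X ω, w⟫_ℝ + ℓ (-⟪X ω, w⟫_ℝ)) / 2 := by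
      intro ω
      rcases le_total (⟪X ω, w⟫_ℝ) 0 with h | h
      · have h1 := hlow _ h
        have h2 := hℓpos (-⟪X ω, w⟫_ℝ)
        linarith
      · have h1 := hlow (-⟪X ω, w⟫_ℝ) (by linarith)
        rw [abs_neg] at h1
        have h2 := hℓpos (⟪X ω, w⟫_ℝ)
        linarith
    have hlow1 : γ/2 * (‖w‖ * m) ≤ ∫ ω, (ℓ ⟪X ω, w⟫_ℝ + ℓ (-⟪X ω, w⟫_ℝ)) / 2 ∂μ := by
      have h := integral_mono ((hIntX w).const_mul (γ/2)) (hIntR w) hptlow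
      rwa [integral_const_mul, hIw] at h
    -- lower bound 2
    have hlow2 : ℓ 0 ≤ ∫ ω, (ℓ ⟪X ω, w⟫_ℝ + ℓ (-⟪X ω, w⟫_ℝ)) / 2 ∂μ := by
      have h := integral_mono (integrable_const (ℓ 0)) (hIntR w) (fun ω => hconvpt _)
      rwa [integral_const, probReal_univ, one_smul] at h
    -- upper bound
    have hLc' : (Real.toNNReal Lc : ℝ) = Lc := Real.coe_toNNReal _ hLc.le
    have hptup : ∀ ω, (ℓ ⟪X ω, w⟫_ℝ + ℓ (-⟪X ω, w⟫_ℝ)) / 2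
        ≤ ℓ 0 + Lc/2 * |⟪X ω, w⟫_ℝ| := by
      intro ω
      rcases le_total (⟪X ω, w⟫_ℝ) 0 with h | h
      · have h1 : ℓ (-⟪X ω, w⟫_ℝ) ≤ ℓ 0 := hmono (by linarith)
        have h2 := hlip.dist_le_mul (⟪X ω, w⟫_ℝ) 0
        rw [Real.dist_eq, Real.dist_eq, hLc', sub_zero] at h2
        have h3 := (abs_le.mp h2).2
        linarith
      · have h1 : ℓ (⟪X ω, w⟫_ℝ) ≤ ℓ 0 := hmono h
        have h2 := hlip.dist_le_mul (-⟪X ω, w⟫_ℝ) 0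
        rw [Real.dist_eq, Real.dist_eq, hLc', sub_zero, abs_neg] at h2
        have h3 := (abs_le.mp h2).2
        linarith
    have hup : ∫ ω, (ℓ ⟪X ω, w⟫_ℝ + ℓ (-⟪X ω, w⟫_ℝ)) / 2 ∂μ ≤ ℓ 0 + Lc/2 * (‖w‖ * m) := by
      have hint : Integrable (fun ω => ℓ 0 + Lc/2 * |⟪X ω, w⟫_ℝ|) μ :=
        (integrable_const _).add ((hIntX w).const_mul (Lc/2))
      have h := integral_mono (hIntR w) hint hptup
      rwa [integral_add (integrable_const _) ((hIntX w).const_mul (Lc/2)),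
        integral_const, probReal_univ, one_smul,
        integral_const_mul, hIw] at h
    constructor
    · apply max_le _ hlow2
      have ha₂' : a₂ ≠ 0 := ne_of_gt ha₂
      have heqn : γ * Real.log 2 / (4 * a₂) * ‖w‖
          = (γ/2 * ‖w‖) * (Real.log 2 / (2 * a₂)) := by
        field_simp
        ring
      rw [heqn]
      have hx : 0 ≤ γ/2 * ‖w‖ := by positivity
      have hstep := mul_le_mul_of_nonneg_left hmlb hx
      calc (γ/2 * ‖w‖) * (Real.log 2 / (2 * a₂)) ≤ (γ/2 * ‖w‖) * m := hstep
        _ = γ/2 * (‖w‖ * m) := by ring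
        _ ≤ _ := hlow1
    · rw [← hsdef]
      have hx : 0 ≤ Lc/2 * ‖w‖ := by positivity
      have hstep := mul_le_mul_of_nonneg_left hmub hx
      calc ∫ ω, (ℓ ⟪X ω, w⟫_ℝ + ℓ (-⟪X ω, w⟫_ℝ)) / 2 ∂μ
          ≤ ℓ 0 + Lc/2 * (‖w‖ * m) := hup
        _ ≤ Lc / 2 * s * ‖w‖ + ℓ 0 := by nlinarith [hstep]
end

section
/- Under Assumptions 1 and 2 and ρ ∈ (0,1/2), for t = C₀ρ^{−1/2} with C₀ > √(8c₁a₂²/(c₂γ log 2)), one has L̃^ρ(tu) − L̃^ρ(0.5tu) ≥ γ·0.5t·ρ·(log 2)/(2a₂) − 2c₁a₂/(c₂t) > 0 for every unit vector u; hence any population minimizer w̃*^ρ of L̃^ρ satisfies ‖w̃*^ρ‖ ≤ C₀ρ^{−1/2}. -/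
set_option maxHeartbeats 1000000

open MeasureTheory
open scoped InnerProductSpace ENNReal

lemma key_pointwise (ℓ : ℝ → ℝ) (γ c₁ c₂ t : ℝ)
    (hℓpos : ∀ s, 0 ≤ ℓ s) (hconv : ConvexOn ℝ Set.univ ℓ)
    (hlow : ∀ s ≤ (0:ℝ), ℓ 0 + γ * |s| ≤ ℓ s)
    (hdecay : ∀ s ≥ (0:ℝ), ℓ s ≤ c₁ * Real.exp (-c₂ * s))
    (ht : 0 < t) (hc₁ : 0 < c₁) (r : ℝ) :
    γ * (0.5 * t) * max (-r) 0 ≤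
      ℓ (t * r) - ℓ (0.5 * t * r) + c₁ * Real.exp (-(0.5 * c₂ * t) * |r|) := by
  rcases le_or_gt r 0 with hr | hr
  · have hmax : max (-r) 0 = -r := max_eq_left (by linarith)
    have habs : |r| = -r := abs_of_nonpos hr
    have hcv := hconv.2 (Set.mem_univ (t*r)) (Set.mem_univ (0:ℝ))
      (by norm_num : (0:ℝ) ≤ 1/2) (by norm_num : (0:ℝ) ≤ 1/2) (by norm_num)
    simp only [smul_eq_mul, mul_zero, add_zero] at hcv
    have hl := hlow (t*r) (by nlinarith)
    have habs2 : |t * r| = t * (-r) := by rw [abs_mul, abs_of_pos ht, habs]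
    have hexp : 0 ≤ c₁ * Real.exp (-(0.5 * c₂ * t) * |r|) := by positivity
    have h12 : (1/2 : ℝ) * (t*r) = 0.5 * t * r := by ring
    rw [h12] at hcv
    rw [habs2] at hl
    rw [hmax]
    nlinarith
  · have hmax : max (-r) 0 = 0 := max_eq_right (by linarith)
    have habs : |r| = r := abs_of_pos hr
    have hd := hdecay (0.5 * t * r) (by positivity)
    have h1 : -c₂ * (0.5 * t * r) = -(0.5 * c₂ * t) * |r| := by rw [habs]; ring
    rw [h1] at hd
    have := hℓpos (t * r)
    rw [hmax]
    linarith

theorem stmt12 {Ω : Type*} [MeasurableSpace Ω] (μ : Measure Ω) [IsProbabilityMeasure μ]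
    {d : ℕ} (X : Ω → EuclideanSpace ℝ (Fin d)) (Ytil : Ω → ℝ)
    (ℓ : ℝ → ℝ) (Lc γ c₁ c₂ a₀ a₁ a₂ ρ C₀ t : ℝ)
    (hLc : 0 < Lc) (hγ : 0 < γ) (hc₁ : 0 < c₁) (hc₂ : 0 < c₂)
    (ha₀ : 0 < a₀) (ha₁ : 0 < a₁) (ha₂ : 0 < a₂)
    (hρ : ρ ∈ Set.Ioo (0:ℝ) (1/2))
    (hℓpos : ∀ s, 0 ≤ ℓ s) (hmono : Antitone ℓ) (hconv : ConvexOn ℝ Set.univ ℓ)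
    (hlip : LipschitzWith (Real.toNNReal Lc) ℓ)
    (hlow : ∀ s ≤ (0:ℝ), ℓ 0 + γ * |s| ≤ ℓ s)
    (hdecay : ∀ s ≥ (0:ℝ), ℓ s ≤ c₁ * Real.exp (-c₂ * s))
    (hX : AEMeasurable X μ) (hYtilmeas : Measurable Ytil)
    (hYtilval : ∀ ω, Ytil ω = 1 ∨ Ytil ω = -1)
    (hIntExp : ∀ u : EuclideanSpace ℝ (Fin d), ‖u‖ = 1 →
      Integrable (fun ω => Real.exp (a₀ * ⟪X ω, u⟫_ℝ^2)) μ)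
    (hexp2 : ∀ u : EuclideanSpace ℝ (Fin d), ‖u‖ = 1 →
      ∫ ω, Real.exp (a₀ * ⟪X ω, u⟫_ℝ^2) ∂μ ≤ a₁)
    (hexpneg : ∀ u : EuclideanSpace ℝ (Fin d), ‖u‖ = 1 → ∀ s > (0:ℝ),
      ∫ ω, Real.exp (-s * |⟪X ω, u⟫_ℝ|) ∂μ ≤ a₂ / s)
    (hIntX : ∀ u : EuclideanSpace ℝ (Fin d), Integrable (fun ω => |⟪X ω, u⟫_ℝ|) μ)
    (hcond : ∀ A : Set (EuclideanSpace ℝ (Fin d)), MeasurableSet A →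
      ENNReal.ofReal ρ * μ (X ⁻¹' A) ≤ μ ({ω | Ytil ω = 1} ∩ X ⁻¹' A) ∧
      μ ({ω | Ytil ω = 1} ∩ X ⁻¹' A) ≤ ENNReal.ofReal (1 - ρ) * μ (X ⁻¹' A))
    (hInt : ∀ w : EuclideanSpace ℝ (Fin d),
      Integrable (fun ω => ℓ (⟪X ω, w⟫_ℝ * Ytil ω)) μ)
    (hC₀ : C₀ > Real.sqrt (8 * c₁ * a₂^2 / (c₂ * γ * Real.log 2)))
    (ht : t = C₀ / Real.sqrt ρ) :
    (∀ u : EuclideanSpace ℝ (Fin d), ‖u‖ = 1 →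
      (γ * (0.5 * t) * ρ * Real.log 2 / (2 * a₂) - 2 * c₁ * a₂ / (c₂ * t)
          ≤ (∫ ω, ℓ (⟪X ω, t • u⟫_ℝ * Ytil ω) ∂μ)
            - ∫ ω, ℓ (⟪X ω, (0.5 * t) • u⟫_ℝ * Ytil ω) ∂μ) ∧
      0 < γ * (0.5 * t) * ρ * Real.log 2 / (2 * a₂) - 2 * c₁ * a₂ / (c₂ * t)) ∧
    (∀ wt : EuclideanSpace ℝ (Fin d),
      (∀ w, (∫ ω, ℓ (⟪X ω, wt⟫_ℝ * Ytil ω) ∂μ) ≤ ∫ ω, ℓ (⟪X ω, w⟫_ℝ * Ytil ω) ∂μ) →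
      ‖wt‖ ≤ C₀ / Real.sqrt ρ) := by
  obtain ⟨hρ0, hρhalf⟩ := hρ
  have hlog2 : 0 < Real.log 2 := Real.log_pos (by norm_num)
  have hK : 0 ≤ 8 * c₁ * a₂^2 / (c₂ * γ * Real.log 2) := by positivity
  have hC₀pos : 0 < C₀ := lt_of_le_of_lt (Real.sqrt_nonneg _) hC₀
  have hsρ : 0 < Real.sqrt ρ := Real.sqrt_pos.2 hρ0
  have htpos : 0 < t := ht ▸ div_pos hC₀pos hsρ
  have ht2 : t^2 * ρ = C₀^2 := by
    rw [ht, div_pow, Real.sq_sqrt hρ0.le]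
    field_simp
  have hC₀sq : 8 * c₁ * a₂^2 < C₀^2 * (c₂ * γ * Real.log 2) := by
    have h1 : Real.sqrt (8 * c₁ * a₂^2 / (c₂ * γ * Real.log 2)) ^ 2
        = 8 * c₁ * a₂^2 / (c₂ * γ * Real.log 2) := Real.sq_sqrt hK
    have h2 : 8 * c₁ * a₂^2 / (c₂ * γ * Real.log 2) < C₀^2 := by
      nlinarith [Real.sqrt_nonneg (8 * c₁ * a₂^2 / (c₂ * γ * Real.log 2))]
    rw [div_lt_iff₀ (by positivity)] at h2
    linarith
  have hgap : 0 < γ * (0.5 * t) * ρ * Real.log 2 / (2 * a₂) - 2 * c₁ * a₂ / (c₂ * t) := by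
    rw [sub_pos, div_lt_div_iff₀ (by positivity) (by positivity)]
    have e : γ * (0.5 * t) * ρ * Real.log 2 * (c₂ * t) = 0.5 * (c₂ * γ * Real.log 2) * (t^2 * ρ) := by
      ring
    rw [e, ht2]
    nlinarith [hC₀sq]
  have part1 : ∀ u : EuclideanSpace ℝ (Fin d), ‖u‖ = 1 →
      γ * (0.5 * t) * ρ * Real.log 2 / (2 * a₂) - 2 * c₁ * a₂ / (c₂ * t)
        ≤ (∫ ω, ℓ (⟪X ω, t • u⟫_ℝ * Ytil ω) ∂μ)
          - ∫ ω, ℓ (⟪X ω, (0.5 * t) • u⟫_ℝ * Ytil ω) ∂μ := by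
    intro u hu
    have hcont : Continuous fun x : EuclideanSpace ℝ (Fin d) => ⟪x, u⟫_ℝ :=
      continuous_id.inner continuous_const
    have hZae : AEMeasurable (fun ω => ⟪X ω, u⟫_ℝ) μ :=
      hcont.measurable.comp_aemeasurable hX
    have habsae : AEMeasurable (fun ω => |⟪X ω, u⟫_ℝ|) μ :=
      continuous_abs.measurable.comp_aemeasurable hZae
    have hexpint : ∀ s : ℝ, 0 ≤ s → Integrable (fun ω => Real.exp (-s * |⟪X ω, u⟫_ℝ|)) μ := by
      intro s hs
      refine Integrable.mono' (integrable_const 1) ?_ ?_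
      · exact (Real.measurable_exp.comp_aemeasurable
          (aemeasurable_const.mul habsae)).aestronglyMeasurable
      · filter_upwards with ω
        rw [Real.norm_eq_abs, abs_of_pos (Real.exp_pos _)]
        rw [Real.exp_le_one_iff]
        nlinarith [abs_nonneg ⟪X ω, u⟫_ℝ]
    have hEZ : Real.log 2 / (2 * a₂) ≤ ∫ ω, |⟪X ω, u⟫_ℝ| ∂μ := by
      have h2a : (0:ℝ) < 2 * a₂ := by linarith
      have hIexp := hexpint (2*a₂) (by linarith)
      have hmono2 : (∫ ω, (Real.exp (-(2*a₂) * (∫ ω', |⟪X ω', u⟫_ℝ| ∂μ)) * (1 - (-(2*a₂) * (∫ ω', |⟪X ω', u⟫_ℝ| ∂μ)))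
            + (Real.exp (-(2*a₂) * (∫ ω', |⟪X ω', u⟫_ℝ| ∂μ)) * (-(2*a₂))) * |⟪X ω, u⟫_ℝ|) ∂μ)
          ≤ ∫ ω, Real.exp (-(2*a₂) * |⟪X ω, u⟫_ℝ|) ∂μ := by
        refine integral_mono ((integrable_const _).add ((hIntX u).const_mul _)) hIexp ?_
        intro ω
        simp only
        have h := Real.add_one_le_exp
          (-(2*a₂) * |⟪X ω, u⟫_ℝ| - (-(2*a₂) * (∫ ω', |⟪X ω', u⟫_ℝ| ∂μ)))
        have h2 : Real.exp (-(2*a₂) * |⟪X ω, u⟫_ℝ| - (-(2*a₂) * (∫ ω', |⟪X ω', u⟫_ℝ| ∂μ)))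
              * Real.exp (-(2*a₂) * (∫ ω', |⟪X ω', u⟫_ℝ| ∂μ))
            = Real.exp (-(2*a₂) * |⟪X ω, u⟫_ℝ|) := by
          rw [← Real.exp_add]
          congr 1
          ring
        nlinarith [Real.exp_pos (-(2*a₂) * (∫ ω', |⟪X ω', u⟫_ℝ| ∂μ))]
      have hcomp : (∫ ω, (Real.exp (-(2*a₂) * (∫ ω', |⟪X ω', u⟫_ℝ| ∂μ)) * (1 - (-(2*a₂) * (∫ ω', |⟪X ω', u⟫_ℝ| ∂μ)))
            + (Real.exp (-(2*a₂) * (∫ ω', |⟪X ω', u⟫_ℝ| ∂μ)) * (-(2*a₂))) * |⟪X ω, u⟫_ℝ|) ∂μ)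
          = Real.exp (-(2*a₂) * (∫ ω', |⟪X ω', u⟫_ℝ| ∂μ)) := by
        rw [integral_add (integrable_const _) ((hIntX u).const_mul _), integral_const,
          integral_const_mul]
        simp only [probReal_univ, one_smul]
        ring
      have hub := hexpneg u hu (2*a₂) h2a
      have hhalf : a₂ / (2*a₂) = 1/2 := by
        field_simp
      have hexpm : Real.exp (-(2*a₂) * (∫ ω', |⟪X ω', u⟫_ℝ| ∂μ)) ≤ 1/2 := by
        rw [← hhalf]
        linarith [hmono2, hcomp, hub]
      have hlogle : -(2*a₂) * (∫ ω', |⟪X ω', u⟫_ℝ| ∂μ) ≤ Real.log (1/2) := by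
        rw [Real.le_log_iff_exp_le (by norm_num : (0:ℝ) < 1/2)]
        exact hexpm
      rw [Real.log_div one_ne_zero (by norm_num), Real.log_one] at hlogle
      rw [div_le_iff₀ h2a]
      linarith
    have hS1m : MeasurableSet {ω | Ytil ω = (1:ℝ)} := hYtilmeas (measurableSet_singleton 1)
    have hS2m : MeasurableSet {ω | Ytil ω = (-1:ℝ)} := hYtilmeas (measurableSet_singleton (-1))
    have hS2c : {ω | Ytil ω = (-1:ℝ)} = {ω | Ytil ω = (1:ℝ)}ᶜ := by
      ext ω
      simp only [Set.mem_compl_iff, Set.mem_setOf_eq]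
      constructor
      · intro h h1
        rw [h1] at h
        norm_num at h
      · intro h
        rcases hYtilval ω with h1 | h1
        · exact absurd h1 h
        · exact h1
    have hsub : ∀ (S : Set Ω), MeasurableSet S →
        (∀ A : Set (EuclideanSpace ℝ (Fin d)), MeasurableSet A →
          ENNReal.ofReal ρ * μ (X ⁻¹' A) ≤ μ (X ⁻¹' A ∩ S)) →
        ∀ f : EuclideanSpace ℝ (Fin d) → ℝ≥0∞, Measurable f →
        ENNReal.ofReal ρ * ∫⁻ ω, f (X ω) ∂μ ≤ ∫⁻ ω in S, f (X ω) ∂μ := by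
      intro S hSm hSlow f hf
      have hle : (ENNReal.ofReal ρ) • (μ.map X) ≤ (μ.restrict S).map X := by
        rw [Measure.le_iff]
        intro A hA
        rw [Measure.smul_apply, smul_eq_mul,
          Measure.map_apply_of_aemeasurable hX hA,
          Measure.map_apply_of_aemeasurable (hX.restrict) hA,
          Measure.restrict_apply' hSm]
        exact hSlow A hA
      calc ENNReal.ofReal ρ * ∫⁻ ω, f (X ω) ∂μ
          = ENNReal.ofReal ρ * ∫⁻ x, f x ∂(μ.map X) := by
            rw [lintegral_map' hf.aemeasurable hX]
        _ = ∫⁻ x, f x ∂((ENNReal.ofReal ρ) • μ.map X) := by rw [lintegral_smul_measure, smul_eq_mul]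
        _ ≤ ∫⁻ x, f x ∂((μ.restrict S).map X) := lintegral_mono' hle le_rfl
        _ = ∫⁻ ω, f (X ω) ∂(μ.restrict S) := lintegral_map' hf.aemeasurable hX.restrict
    have hlow1 : ∀ A : Set (EuclideanSpace ℝ (Fin d)), MeasurableSet A →
        ENNReal.ofReal ρ * μ (X ⁻¹' A) ≤ μ (X ⁻¹' A ∩ {ω | Ytil ω = (1:ℝ)}) := by
      intro A hA
      rw [Set.inter_comm]
      exact (hcond A hA).1
    have hlow2 : ∀ A : Set (EuclideanSpace ℝ (Fin d)), MeasurableSet A →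
        ENNReal.ofReal ρ * μ (X ⁻¹' A) ≤ μ (X ⁻¹' A ∩ {ω | Ytil ω = (-1:ℝ)}) := by
      intro A hA
      have hsplit : μ (X ⁻¹' A ∩ {ω | Ytil ω = (1:ℝ)}) + μ (X ⁻¹' A \ {ω | Ytil ω = (1:ℝ)})
          = μ (X ⁻¹' A) := measure_inter_add_diff _ hS1m
      have hup := (hcond A hA).2
      rw [Set.inter_comm] at hup
      have hfin : μ (X ⁻¹' A ∩ {ω | Ytil ω = (1:ℝ)}) ≠ ⊤ := measure_ne_top μ _
      have hdiff : X ⁻¹' A \ {ω | Ytil ω = (1:ℝ)} = X ⁻¹' A ∩ {ω | Ytil ω = (-1:ℝ)} := by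
        rw [hS2c]
        rfl
      have h1 : ENNReal.ofReal ρ * μ (X ⁻¹' A) + μ (X ⁻¹' A ∩ {ω | Ytil ω = (1:ℝ)})
          ≤ μ (X ⁻¹' A) := by
        calc ENNReal.ofReal ρ * μ (X ⁻¹' A) + μ (X ⁻¹' A ∩ {ω | Ytil ω = (1:ℝ)})
            ≤ ENNReal.ofReal ρ * μ (X ⁻¹' A) + ENNReal.ofReal (1-ρ) * μ (X ⁻¹' A) :=
              by gcongr
          _ = (ENNReal.ofReal ρ + ENNReal.ofReal (1-ρ)) * μ (X ⁻¹' A) := (add_mul _ _ _).symm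
          _ = μ (X ⁻¹' A) := by
              rw [← ENNReal.ofReal_add hρ0.le (by linarith)]
              norm_num
      have h2 : ENNReal.ofReal ρ * μ (X ⁻¹' A) + μ (X ⁻¹' A ∩ {ω | Ytil ω = (1:ℝ)})
          ≤ μ (X ⁻¹' A \ {ω | Ytil ω = (1:ℝ)}) + μ (X ⁻¹' A ∩ {ω | Ytil ω = (1:ℝ)}) := by
        rw [add_comm (μ (X ⁻¹' A \ {ω | Ytil ω = (1:ℝ)}))]
        rw [hsplit]
        exact h1
      rw [← hdiff]
      rwa [ENNReal.add_le_add_iff_right hfin] at h2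
    have hfmm : Measurable fun x : EuclideanSpace ℝ (Fin d) =>
        ENNReal.ofReal (max (-⟪x, u⟫_ℝ) 0) :=
      ((hcont.neg.max continuous_const).measurable).ennreal_ofReal
    have hfpm : Measurable fun x : EuclideanSpace ℝ (Fin d) =>
        ENNReal.ofReal (max (⟪x, u⟫_ℝ) 0) :=
      ((hcont.max continuous_const).measurable).ennreal_ofReal
    have hs1 := hsub _ hS1m hlow1 _ hfmm
    have hs2 := hsub _ hS2m hlow2 _ hfpm
    have habs_split : ∀ z : ℝ,
        ENNReal.ofReal |z| = ENNReal.ofReal (max (-z) 0) + ENNReal.ofReal (max z 0) := by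
      intro z
      rw [← ENNReal.ofReal_add (le_max_right _ _) (le_max_right _ _)]
      congr 1
      rcases le_total z 0 with h | h
      · rw [max_eq_left (by linarith), max_eq_right h, abs_of_nonpos h]
        ring
      · rw [max_eq_right (by linarith), max_eq_left h, abs_of_nonneg h]
        ring
    have e1 : ∫⁻ ω, ENNReal.ofReal |⟪X ω, u⟫_ℝ| ∂μ
        = (∫⁻ ω, ENNReal.ofReal (max (-⟪X ω, u⟫_ℝ) 0) ∂μ)
          + ∫⁻ ω, ENNReal.ofReal (max (⟪X ω, u⟫_ℝ) 0) ∂μ := by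
      rw [← lintegral_add_left' (f := fun ω => ENNReal.ofReal (max (-⟪X ω, u⟫_ℝ) 0)) ((hZae.neg.max aemeasurable_const).ennreal_ofReal)]
      exact lintegral_congr fun ω => habs_split _
    have e2 : ∫⁻ ω, ENNReal.ofReal (max (-(⟪X ω, u⟫_ℝ * Ytil ω)) 0) ∂μ
        = (∫⁻ ω in {ω | Ytil ω = (1:ℝ)}, ENNReal.ofReal (max (-⟪X ω, u⟫_ℝ) 0) ∂μ)
          + ∫⁻ ω in {ω | Ytil ω = (-1:ℝ)}, ENNReal.ofReal (max (⟪X ω, u⟫_ℝ) 0) ∂μ := by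
      rw [← lintegral_indicator hS1m, ← lintegral_indicator hS2m,
        ← lintegral_add_left' (f := {ω | Ytil ω = (1:ℝ)}.indicator fun ω => ENNReal.ofReal (max (-⟪X ω, u⟫_ℝ) 0))
          (((hZae.neg.max aemeasurable_const).ennreal_ofReal).indicator hS1m)]
      refine lintegral_congr fun ω => ?_
      rcases hYtilval ω with h | h
      · have h1 : ω ∈ {ω | Ytil ω = (1:ℝ)} := h
        have h2 : ω ∉ {ω | Ytil ω = (-1:ℝ)} := by
          rw [hS2c]
          exact fun hh => hh h1
        rw [Set.indicator_of_mem h1, Set.indicator_of_notMem h2, add_zero, h, mul_one]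
      · have h1 : ω ∉ {ω | Ytil ω = (1:ℝ)} := by
          intro hh
          rw [Set.mem_setOf_eq] at hh
          rw [hh] at h
          norm_num at h
        have h2 : ω ∈ {ω | Ytil ω = (-1:ℝ)} := h
        rw [Set.indicator_of_notMem h1, Set.indicator_of_mem h2, zero_add, h, mul_neg_one,
          neg_neg]
    have hchain : ENNReal.ofReal ρ * ∫⁻ ω, ENNReal.ofReal |⟪X ω, u⟫_ℝ| ∂μ
        ≤ ∫⁻ ω, ENNReal.ofReal (max (-(⟪X ω, u⟫_ℝ * Ytil ω)) 0) ∂μ := by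
      rw [e1, e2, mul_add]
      exact add_le_add hs1 hs2
    have hGae : AEMeasurable (fun ω => max (-(⟪X ω, u⟫_ℝ * Ytil ω)) 0) μ :=
      ((hZae.mul hYtilmeas.aemeasurable).neg.max aemeasurable_const)
    have hGint : Integrable (fun ω => max (-(⟪X ω, u⟫_ℝ * Ytil ω)) 0) μ := by
      refine (hIntX u).mono' hGae.aestronglyMeasurable ?_
      filter_upwards with ω
      rw [Real.norm_eq_abs, abs_of_nonneg (le_max_right _ _)]
      have hy : |Ytil ω| = 1 := by
        rcases hYtilval ω with h | h <;> simp [h]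
      refine max_le ?_ (abs_nonneg _)
      calc -(⟪X ω, u⟫_ℝ * Ytil ω) ≤ |⟪X ω, u⟫_ℝ * Ytil ω| := neg_le_abs _
        _ = |⟪X ω, u⟫_ℝ| := by rw [abs_mul, hy, mul_one]
    have claim3 : ρ * (∫ ω, |⟪X ω, u⟫_ℝ| ∂μ)
        ≤ ∫ ω, max (-(⟪X ω, u⟫_ℝ * Ytil ω)) 0 ∂μ := by
      have hnn : (0:ℝ) ≤ ∫ ω, max (-(⟪X ω, u⟫_ℝ * Ytil ω)) 0 ∂μ :=
        integral_nonneg fun ω => le_max_right _ _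
      rw [← ENNReal.ofReal_le_ofReal_iff hnn,
        ENNReal.ofReal_mul hρ0.le,
        ofReal_integral_eq_lintegral_ofReal (hIntX u)
          (Filter.Eventually.of_forall fun ω => abs_nonneg _),
        ofReal_integral_eq_lintegral_ofReal hGint
          (Filter.Eventually.of_forall fun ω => le_max_right _ _)]
      exact hchain
    have hfunt : (fun ω => ℓ (⟪X ω, t • u⟫_ℝ * Ytil ω))
        = fun ω => ℓ (t * ⟪X ω, u⟫_ℝ * Ytil ω) :=
      funext fun ω => by rw [real_inner_smul_right]
    have hfunh : (fun ω => ℓ (⟪X ω, (0.5 * t) • u⟫_ℝ * Ytil ω))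
        = fun ω => ℓ (0.5 * t * ⟪X ω, u⟫_ℝ * Ytil ω) :=
      funext fun ω => by rw [real_inner_smul_right]
    have hIntt : Integrable (fun ω => ℓ (t * ⟪X ω, u⟫_ℝ * Ytil ω)) μ := hfunt ▸ hInt (t • u)
    have hInth : Integrable (fun ω => ℓ (0.5 * t * ⟪X ω, u⟫_ℝ * Ytil ω)) μ :=
      hfunh ▸ hInt ((0.5 * t) • u)
    have hExpInt : Integrable (fun ω => Real.exp (-(0.5*c₂*t) * |⟪X ω, u⟫_ℝ|)) μ :=
      hexpint _ (by positivity)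
    have claim4 : ∀ ω, γ * (0.5 * t) * max (-(⟪X ω, u⟫_ℝ * Ytil ω)) 0
        ≤ ℓ (t * ⟪X ω, u⟫_ℝ * Ytil ω) - ℓ (0.5 * t * ⟪X ω, u⟫_ℝ * Ytil ω)
          + c₁ * Real.exp (-(0.5*c₂*t) * |⟪X ω, u⟫_ℝ|) := by
      intro ω
      have hy : |⟪X ω, u⟫_ℝ * Ytil ω| = |⟪X ω, u⟫_ℝ| := by
        rcases hYtilval ω with h | h <;> simp [h, abs_mul]
      have h := key_pointwise ℓ γ c₁ c₂ t hℓpos hconv hlow hdecay htpos hc₁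
        (⟪X ω, u⟫_ℝ * Ytil ω)
      rw [hy,
        show t * (⟪X ω, u⟫_ℝ * Ytil ω) = t * ⟪X ω, u⟫_ℝ * Ytil ω from (mul_assoc _ _ _).symm,
        show 0.5 * t * (⟪X ω, u⟫_ℝ * Ytil ω) = 0.5 * t * ⟪X ω, u⟫_ℝ * Ytil ω from by ring] at h
      exact h
    have hsubint : Integrable (fun ω => ℓ (t * ⟪X ω, u⟫_ℝ * Ytil ω)
        - ℓ (0.5 * t * ⟪X ω, u⟫_ℝ * Ytil ω)) μ := hIntt.sub hInth
    have hDint : Integrable (fun ω => ℓ (t * ⟪X ω, u⟫_ℝ * Ytil ω)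
        - ℓ (0.5 * t * ⟪X ω, u⟫_ℝ * Ytil ω)
        + c₁ * Real.exp (-(0.5*c₂*t) * |⟪X ω, u⟫_ℝ|)) μ := hsubint.add (hExpInt.const_mul c₁)
    have hint4 : γ * (0.5 * t) * (∫ ω, max (-(⟪X ω, u⟫_ℝ * Ytil ω)) 0 ∂μ)
        ≤ (∫ ω, ℓ (t * ⟪X ω, u⟫_ℝ * Ytil ω) ∂μ)
          - (∫ ω, ℓ (0.5 * t * ⟪X ω, u⟫_ℝ * Ytil ω) ∂μ)
          + c₁ * ∫ ω, Real.exp (-(0.5*c₂*t) * |⟪X ω, u⟫_ℝ|) ∂μ := by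
      have hmono4 : (∫ ω, γ * (0.5 * t) * max (-(⟪X ω, u⟫_ℝ * Ytil ω)) 0 ∂μ)
          ≤ ∫ ω, (ℓ (t * ⟪X ω, u⟫_ℝ * Ytil ω) - ℓ (0.5 * t * ⟪X ω, u⟫_ℝ * Ytil ω)
            + c₁ * Real.exp (-(0.5*c₂*t) * |⟪X ω, u⟫_ℝ|)) ∂μ := by
        refine integral_mono (hGint.const_mul _) hDint ?_
        intro ω
        exact claim4 ω
      rw [integral_const_mul] at hmono4
      rwa [integral_add hsubint (hExpInt.const_mul c₁), integral_sub hIntt hInth,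
        integral_const_mul] at hmono4
    have hexpub := hexpneg u hu (0.5*c₂*t) (by positivity)
    have e4 : c₁ * (a₂ / (0.5*c₂*t)) = 2*c₁*a₂/(c₂*t) := by
      have hc2 : c₂ ≠ 0 := ne_of_gt hc₂
      have htne : t ≠ 0 := ne_of_gt htpos
      field_simp
      ring
    have h5 : γ * (0.5 * t) * ρ * (Real.log 2 / (2*a₂))
        ≤ γ * (0.5 * t) * ρ * (∫ ω, |⟪X ω, u⟫_ℝ| ∂μ) :=
      mul_le_mul_of_nonneg_left hEZ (by positivity)
    have h6 : γ * (0.5 * t) * (ρ * (∫ ω, |⟪X ω, u⟫_ℝ| ∂μ))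
        ≤ γ * (0.5 * t) * (∫ ω, max (-(⟪X ω, u⟫_ℝ * Ytil ω)) 0 ∂μ) :=
      mul_le_mul_of_nonneg_left claim3 (by positivity)
    have h7 : c₁ * (∫ ω, Real.exp (-(0.5*c₂*t) * |⟪X ω, u⟫_ℝ|) ∂μ) ≤ c₁ * (a₂/(0.5*c₂*t)) :=
      mul_le_mul_of_nonneg_left hexpub hc₁.le
    have hA : (∫ ω, ℓ (⟪X ω, t • u⟫_ℝ * Ytil ω) ∂μ)
        = ∫ ω, ℓ (t * ⟪X ω, u⟫_ℝ * Ytil ω) ∂μ := by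
      rw [hfunt]
    have hB : (∫ ω, ℓ (⟪X ω, (0.5 * t) • u⟫_ℝ * Ytil ω) ∂μ)
        = ∫ ω, ℓ (0.5 * t * ⟪X ω, u⟫_ℝ * Ytil ω) ∂μ := by
      rw [hfunh]
    rw [hA, hB]
    have h8 : γ * (0.5 * t) * ρ * Real.log 2 / (2 * a₂)
        = γ * (0.5 * t) * ρ * (Real.log 2 / (2*a₂)) := by ring
    have h9 : γ * (0.5 * t) * ρ * (∫ ω, |⟪X ω, u⟫_ℝ| ∂μ)
        = γ * (0.5 * t) * (ρ * (∫ ω, |⟪X ω, u⟫_ℝ| ∂μ)) := by ring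
    linarith [hint4]
  refine ⟨fun u hu => ⟨part1 u hu, hgap⟩, ?_⟩
  intro wt hwt
  by_contra hcon
  push_neg at hcon
  rw [← ht] at hcon
  have hrpos : 0 < ‖wt‖ := lt_trans htpos hcon
  set r := ‖wt‖ with hrdef
  obtain ⟨u, hu, hwtu⟩ : ∃ u : EuclideanSpace ℝ (Fin d), ‖u‖ = 1 ∧ wt = r • u := by
    refine ⟨r⁻¹ • wt, ?_, ?_⟩
    · rw [norm_smul, norm_inv, Real.norm_eq_abs, abs_of_pos hrpos, ← hrdef,
        inv_mul_cancel₀ (ne_of_gt hrpos)]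
    · rw [smul_smul, mul_inv_cancel₀ (ne_of_gt hrpos), one_smul]
  obtain ⟨θ, hθdef⟩ : ∃ θ : ℝ, θ = (r - t)/(r - 0.5*t) := ⟨_, rfl⟩
  have hden : 0 < r - 0.5*t := by linarith
  have hθ0 : 0 ≤ θ := hθdef ▸ div_nonneg (by linarith) hden.le
  have hθ1 : 1 - θ = (0.5*t)/(r - 0.5*t) := by
    rw [hθdef, eq_div_iff hden.ne', sub_mul, div_mul_cancel₀ _ hden.ne']; ring
  have hθ1' : 0 ≤ 1 - θ := by rw [hθ1]; positivity
  have hsc : θ*(0.5*t) + (1-θ)*r = t := by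
    rw [hθ1, hθdef, div_mul_eq_mul_div, div_mul_eq_mul_div, ← add_div, div_eq_iff hden.ne']
    ring
  have hconvL : (∫ ω, ℓ (⟪X ω, t • u⟫_ℝ * Ytil ω) ∂μ)
      ≤ θ * (∫ ω, ℓ (⟪X ω, (0.5*t) • u⟫_ℝ * Ytil ω) ∂μ)
        + (1-θ) * ∫ ω, ℓ (⟪X ω, wt⟫_ℝ * Ytil ω) ∂μ := by
    rw [← integral_const_mul, ← integral_const_mul,
      ← integral_add ((hInt _).const_mul _) ((hInt _).const_mul _)]
    refine integral_mono (hInt _) (((hInt _).const_mul _).add ((hInt _).const_mul _)) ?_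
    intro ω
    simp only
    have hin : ⟪X ω, t • u⟫_ℝ * Ytil ω
        = θ * (⟪X ω, (0.5*t) • u⟫_ℝ * Ytil ω) + (1-θ) * (⟪X ω, wt⟫_ℝ * Ytil ω) := by
      rw [hwtu, real_inner_smul_right, real_inner_smul_right, real_inner_smul_right]
      linear_combination (-(⟪X ω, u⟫_ℝ * Ytil ω)) * hsc
    rw [hin]
    exact hconv.2 (Set.mem_univ _) (Set.mem_univ _) hθ0 hθ1' (by ring)
  have hmin := hwt ((0.5*t) • u)
  have hp := part1 u hu
  have h1 : (1-θ) * (∫ ω, ℓ (⟪X ω, wt⟫_ℝ * Ytil ω) ∂μ)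
      ≤ (1-θ) * ∫ ω, ℓ (⟪X ω, (0.5*t) • u⟫_ℝ * Ytil ω) ∂μ :=
    mul_le_mul_of_nonneg_left hmin hθ1'
  have h2 : θ * (∫ ω, ℓ (⟪X ω, (0.5*t) • u⟫_ℝ * Ytil ω) ∂μ)
      + (1-θ) * (∫ ω, ℓ (⟪X ω, (0.5*t) • u⟫_ℝ * Ytil ω) ∂μ)
      = ∫ ω, ℓ (⟪X ω, (0.5*t) • u⟫_ℝ * Ytil ω) ∂μ := by ring
  linarith
end

section
/- Under Assumptions 1 and 2, any minimizer w̃*^ρ of L̃^ρ satisfies L(w̃*^ρ) ≤ inf_{w∈ℝ^d} L(w) + C₁ρ^{1/2}, where C₁ = √(8βc₁a₂/c₂) and β = L√(a₁/a₀). -/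
open MeasureTheory
open scoped InnerProductSpace

set_option maxHeartbeats 1000000 in
theorem stmt14 {Ω : Type*} [MeasurableSpace Ω] (μ : Measure Ω) [IsProbabilityMeasure μ]
    {d : ℕ} (X : Ω → EuclideanSpace ℝ (Fin d)) (Y : Ω → ℝ)
    (ℓ : ℝ → ℝ) (Lc γ c₁ c₂ a₀ a₁ a₂ ρ : ℝ)
    (hLc : 0 < Lc) (hγ : 0 < γ) (hc₁ : 0 < c₁) (hc₂ : 0 < c₂)
    (ha₀ : 0 < a₀) (ha₁ : 0 < a₁) (ha₂ : 0 < a₂)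
    (hρ : ρ ∈ Set.Ioo (0:ℝ) (1/2))
    (hℓpos : ∀ s, 0 ≤ ℓ s) (hmono : Antitone ℓ) (hconv : ConvexOn ℝ Set.univ ℓ)
    (hlip : LipschitzWith (Real.toNNReal Lc) ℓ)
    (hlow : ∀ s ≤ (0:ℝ), ℓ 0 + γ * |s| ≤ ℓ s)
    (hdecay : ∀ s ≥ (0:ℝ), ℓ s ≤ c₁ * Real.exp (-c₂ * s))
    (hX : AEMeasurable X μ) (hYmeas : Measurable Y)
    (hYval : ∀ ω, Y ω = 1 ∨ Y ω = -1)
    (hIntExp : ∀ u : EuclideanSpace ℝ (Fin d), ‖u‖ = 1 →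
      Integrable (fun ω => Real.exp (a₀ * ⟪X ω, u⟫_ℝ^2)) μ)
    (hexp2 : ∀ u : EuclideanSpace ℝ (Fin d), ‖u‖ = 1 →
      ∫ ω, Real.exp (a₀ * ⟪X ω, u⟫_ℝ^2) ∂μ ≤ a₁)
    (hexpneg : ∀ u : EuclideanSpace ℝ (Fin d), ‖u‖ = 1 → ∀ s > (0:ℝ),
      ∫ ω, Real.exp (-s * |⟪X ω, u⟫_ℝ|) ∂μ ≤ a₂ / s)
    (hIntX : ∀ u : EuclideanSpace ℝ (Fin d), Integrable (fun ω => |⟪X ω, u⟫_ℝ|) μ)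
    (L : EuclideanSpace ℝ (Fin d) → ℝ)
    (hLdef : ∀ w, L w = ∫ ω, ℓ (⟪X ω, w⟫_ℝ * Y ω) ∂μ)
    (hInt : ∀ w : EuclideanSpace ℝ (Fin d),
      Integrable (fun ω => ℓ (⟪X ω, w⟫_ℝ * Y ω)) μ)
    (wt : EuclideanSpace ℝ (Fin d))
    (hmin : ∀ w, (1 - ρ) * L wt + ρ * L (-wt) ≤ (1 - ρ) * L w + ρ * L (-w)) :
    L wt ≤ (⨅ w, L w) + Real.sqrt (8 * (Lc * Real.sqrt (a₁ / a₀)) * c₁ * a₂ / c₂)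
        * Real.sqrt ρ := by
  obtain ⟨hρ0, hρh⟩ := hρ
  have hY1 : ∀ ω, |Y ω| = 1 := fun ω => by rcases hYval ω with h | h <;> simp [h]
  have hsa : (0:ℝ) ≤ a₁ / a₀ := le_of_lt (div_pos ha₁ ha₀)
  set σ : ℝ := Real.sqrt (a₁ / a₀) with hσdef
  have hσ : 0 < σ := Real.sqrt_pos.mpr (div_pos ha₁ ha₀)
  set β : ℝ := Lc * σ with hβdef
  have hβ : 0 < β := mul_pos hLc hσ
  have hZm : ∀ u : EuclideanSpace ℝ (Fin d), AEMeasurable (fun ω => ⟪X ω, u⟫_ℝ) μ :=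
    fun u => AEMeasurable.inner hX aemeasurable_const
  -- Step A : first absolute moment bound for unit vectors
  have habs : ∀ u : EuclideanSpace ℝ (Fin d), ‖u‖ = 1 →
      ∫ ω, |⟪X ω, u⟫_ℝ| ∂μ ≤ σ := by
    intro u hu
    have hIexp := hIntExp u hu
    have hptsq : ∀ ω, ⟪X ω, u⟫_ℝ ^ 2 ≤ Real.exp (a₀ * ⟪X ω, u⟫_ℝ ^ 2) / a₀ := by
      intro ω
      rw [le_div_iff₀ ha₀]
      have h1 := Real.add_one_le_exp (a₀ * ⟪X ω, u⟫_ℝ ^ 2)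
      nlinarith [sq_nonneg (⟪X ω, u⟫_ℝ)]
    have hsqInt : Integrable (fun ω => ⟪X ω, u⟫_ℝ ^ 2) μ := by
      refine (hIexp.div_const a₀).mono' (((hZm u).pow_const 2).aestronglyMeasurable) ?_
      filter_upwards with ω
      rw [Real.norm_eq_abs, abs_of_nonneg (sq_nonneg _)]
      exact hptsq ω
    have hsq_le : ∫ ω, ⟪X ω, u⟫_ℝ ^ 2 ∂μ ≤ a₁ / a₀ := by
      have h1 : ∫ ω, ⟪X ω, u⟫_ℝ ^ 2 ∂μ ≤ ∫ ω, Real.exp (a₀ * ⟪X ω, u⟫_ℝ ^ 2) / a₀ ∂μ :=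
        integral_mono hsqInt (hIexp.div_const a₀) hptsq
      rw [integral_div] at h1
      refine h1.trans ?_
      gcongr
      exact hexp2 u hu
    set m : ℝ := ∫ ω, |⟪X ω, u⟫_ℝ| ∂μ with hmdef
    have hm0 : 0 ≤ m := integral_nonneg fun _ => abs_nonneg _
    have hvar : 0 ≤ ∫ ω, (|⟪X ω, u⟫_ℝ| - m) ^ 2 ∂μ := integral_nonneg fun _ => sq_nonneg _
    have hIsub : Integrable (fun ω => ⟪X ω, u⟫_ℝ ^ 2 - 2 * m * |⟪X ω, u⟫_ℝ|) μ :=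
      hsqInt.sub ((hIntX u).const_mul (2 * m))
    have hexpand : ∫ ω, (|⟪X ω, u⟫_ℝ| - m) ^ 2 ∂μ
        = (∫ ω, ⟪X ω, u⟫_ℝ ^ 2 ∂μ) - m ^ 2 := by
      have hpt : ∀ ω, (|⟪X ω, u⟫_ℝ| - m) ^ 2
          = (⟪X ω, u⟫_ℝ ^ 2 - 2 * m * |⟪X ω, u⟫_ℝ|) + m ^ 2 := by
        intro ω
        nlinarith [sq_abs (⟪X ω, u⟫_ℝ)]
      calc ∫ ω, (|⟪X ω, u⟫_ℝ| - m) ^ 2 ∂μ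
          = ∫ ω, ((⟪X ω, u⟫_ℝ ^ 2 - 2 * m * |⟪X ω, u⟫_ℝ|) + m ^ 2) ∂μ := by
            simp only [hpt]
        _ = (∫ ω, ⟪X ω, u⟫_ℝ ^ 2 ∂μ) - m ^ 2 := by
            rw [integral_add hIsub (integrable_const (m ^ 2)),
              integral_sub hsqInt ((hIntX u).const_mul (2 * m)),
              integral_const_mul, integral_const]
            simp only [measure_univ, probReal_univ, ENNReal.toReal_one, smul_eq_mul, one_mul, one_smul]
            rw [← hmdef]
            ring
    have hm2 : m ^ 2 ≤ a₁ / a₀ := by rw [hexpand] at hvar; linarith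
    exact (Real.le_sqrt hm0 hsa).mpr hm2
  -- scaled version
  have habs' : ∀ w : EuclideanSpace ℝ (Fin d), ∫ ω, |⟪X ω, w⟫_ℝ| ∂μ ≤ ‖w‖ * σ := by
    intro w
    rcases eq_or_ne w 0 with rfl | hw
    · simp
    · have hnw : (0:ℝ) < ‖w‖ := norm_pos_iff.mpr hw
      set u : EuclideanSpace ℝ (Fin d) := ‖w‖⁻¹ • w with hudef
      have hu : ‖u‖ = 1 := by
        rw [hudef, norm_smul, norm_inv, norm_norm, inv_mul_cancel₀ hnw.ne']
      have hwu : w = ‖w‖ • u := by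
        rw [hudef, smul_smul, mul_inv_cancel₀ hnw.ne', one_smul]
      have hpt : ∀ ω, |⟪X ω, w⟫_ℝ| = ‖w‖ * |⟪X ω, u⟫_ℝ| := by
        intro ω
        conv_lhs => rw [hwu]
        rw [real_inner_smul_right, abs_mul, abs_of_pos hnw]
      calc ∫ ω, |⟪X ω, w⟫_ℝ| ∂μ = ∫ ω, ‖w‖ * |⟪X ω, u⟫_ℝ| ∂μ := by simp only [hpt]
        _ = ‖w‖ * ∫ ω, |⟪X ω, u⟫_ℝ| ∂μ := integral_const_mul _ _
        _ ≤ ‖w‖ * σ := mul_le_mul_of_nonneg_left (habs u hu) hnw.le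
  -- Step B
  have hB : ∀ w, L wt ≤ (1 - ρ) * L w + ρ * L (-w) := by
    intro w
    have h1 := hmin (-wt)
    rw [neg_neg] at h1
    have h2 : L wt ≤ L (-wt) := by nlinarith
    have h3 := hmin w
    linarith [mul_le_mul_of_nonneg_left h2 hρ0.le]
  -- Step C
  have hC : ∀ w' : EuclideanSpace ℝ (Fin d), L (-w') ≤ L w' + 2 * Lc * (‖w'‖ * σ) := by
    intro w'
    have hLcc := Real.coe_toNNReal Lc hLc.le
    have hpt : ∀ ω, ℓ (⟪X ω, -w'⟫_ℝ * Y ω)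
        ≤ ℓ (⟪X ω, w'⟫_ℝ * Y ω) + 2 * Lc * |⟪X ω, w'⟫_ℝ| := by
      intro ω
      set z : ℝ := ⟪X ω, w'⟫_ℝ * Y ω with hz
      have hzn : ⟪X ω, -w'⟫_ℝ * Y ω = -z := by rw [inner_neg_right]; ring
      rw [hzn]
      have hza : |z| = |⟪X ω, w'⟫_ℝ| := by rw [hz, abs_mul, hY1, mul_one]
      have hd := hlip.dist_le_mul (-z) z
      rw [hLcc, Real.dist_eq, Real.dist_eq] at hd
      have h1 : -z - z = -(2 * z) := by ring
      rw [h1, abs_neg, abs_mul, abs_two] at hd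
      have h2 := (abs_le.mp hd).2
      rw [hza] at h2
      linarith
    rw [hLdef, hLdef]
    calc ∫ ω, ℓ (⟪X ω, -w'⟫_ℝ * Y ω) ∂μ
        ≤ ∫ ω, (ℓ (⟪X ω, w'⟫_ℝ * Y ω) + 2 * Lc * |⟪X ω, w'⟫_ℝ|) ∂μ := by
          refine integral_mono_of_nonneg (Filter.Eventually.of_forall fun ω => hℓpos _)
            ((hInt w').add ((hIntX w').const_mul (2 * Lc)))
            (Filter.Eventually.of_forall hpt)
      _ = (∫ ω, ℓ (⟪X ω, w'⟫_ℝ * Y ω) ∂μ) + 2 * Lc * ∫ ω, |⟪X ω, w'⟫_ℝ| ∂μ := by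
          rw [integral_add (hInt w') ((hIntX w').const_mul (2 * Lc)), integral_const_mul]
      _ ≤ (∫ ω, ℓ (⟪X ω, w'⟫_ℝ * Y ω) ∂μ) + 2 * Lc * (‖w'‖ * σ) := by
          have h3 := mul_le_mul_of_nonneg_left (habs' w')
            (by positivity : (0:ℝ) ≤ 2 * Lc)
          linarith
  -- Step D : truncation
  have hD : ∀ R : ℝ, 0 < R → ∀ w : EuclideanSpace ℝ (Fin d),
      ∃ w' : EuclideanSpace ℝ (Fin d), ‖w'‖ ≤ R ∧ L w' ≤ L w + c₁ * a₂ / (c₂ * R) := by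
    intro R hR w
    have hpos : 0 < c₁ * a₂ / (c₂ * R) := by positivity
    rcases le_or_gt ‖w‖ R with hwR | hwR
    · exact ⟨w, hwR, by linarith⟩
    · have hnw : (0:ℝ) < ‖w‖ := lt_trans hR hwR
      have hw : w ≠ 0 := norm_pos_iff.mp hnw
      set u : EuclideanSpace ℝ (Fin d) := ‖w‖⁻¹ • w with hudef
      have hu : ‖u‖ = 1 := by
        rw [hudef, norm_smul, norm_inv, norm_norm, inv_mul_cancel₀ hnw.ne']
      refine ⟨R • u, ?_, ?_⟩
      · rw [norm_smul, hu, mul_one, Real.norm_eq_abs, abs_of_pos hR]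
      · set t : ℝ := R / ‖w‖ with htdef
        have ht0 : 0 < t := div_pos hR hnw
        have ht1 : t < 1 := (div_lt_one hnw).mpr hwR
        have hinner : ∀ ω, ⟪X ω, R • u⟫_ℝ = t * ⟪X ω, w⟫_ℝ := by
          intro ω
          rw [hudef, real_inner_smul_right, real_inner_smul_right, htdef]
          ring
        have hptD : ∀ ω, ℓ (⟪X ω, R • u⟫_ℝ * Y ω)
            ≤ ℓ (⟪X ω, w⟫_ℝ * Y ω) + c₁ * Real.exp (-(c₂ * R) * |⟪X ω, u⟫_ℝ|) := by
          intro ω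
          rw [hinner ω, mul_assoc]
          set z : ℝ := ⟪X ω, w⟫_ℝ * Y ω with hz
          have hE : 0 ≤ c₁ * Real.exp (-(c₂ * R) * |⟪X ω, u⟫_ℝ|) := by positivity
          rcases le_or_gt 0 z with hz0 | hz0
          · have h1 : ℓ (t * z) ≤ c₁ * Real.exp (-c₂ * (t * z)) :=
              hdecay _ (by positivity)
            have hzu : z = ‖w‖ * (⟪X ω, u⟫_ℝ * Y ω) := by
              rw [hz, hudef, real_inner_smul_right]
              field_simp
            have habsz : |⟪X ω, u⟫_ℝ| = ⟪X ω, u⟫_ℝ * Y ω := by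
              have hnn : 0 ≤ ⟪X ω, u⟫_ℝ * Y ω := by
                have h0 : 0 ≤ z := hz0
                rw [hzu] at h0
                nlinarith
              rw [← abs_of_nonneg hnn, abs_mul, hY1, mul_one]
            have h2 : t * z = R * |⟪X ω, u⟫_ℝ| := by
              rw [hzu, habsz, htdef]
              field_simp
            have h3 : -c₂ * (t * z) = -(c₂ * R) * |⟪X ω, u⟫_ℝ| := by rw [h2]; ring
            rw [h3] at h1
            linarith [hℓpos z]
          · have h1 : ℓ (t * z) ≤ ℓ z := hmono (by nlinarith : z ≤ t * z)
            linarith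
        have hexpInt : Integrable (fun ω => Real.exp (-(c₂ * R) * |⟪X ω, u⟫_ℝ|)) μ := by
          refine (integrable_const (1:ℝ)).mono'
            ((Real.measurable_exp.comp_aemeasurable
              (((measurable_abs.comp_aemeasurable (hZm u)).const_mul (-(c₂ * R))))).aestronglyMeasurable) ?_
          filter_upwards with ω
          rw [Real.norm_eq_abs, abs_of_nonneg (Real.exp_nonneg _)]
          refine Real.exp_le_one_iff.mpr ?_
          have : 0 ≤ (c₂ * R) * |⟪X ω, u⟫_ℝ| := by positivity
          linarith
        rw [hLdef, hLdef]
        calc ∫ ω, ℓ (⟪X ω, R • u⟫_ℝ * Y ω) ∂μ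
            ≤ ∫ ω, (ℓ (⟪X ω, w⟫_ℝ * Y ω) + c₁ * Real.exp (-(c₂ * R) * |⟪X ω, u⟫_ℝ|)) ∂μ := by
              refine integral_mono_of_nonneg (Filter.Eventually.of_forall fun ω => hℓpos _)
                ((hInt w).add (hexpInt.const_mul c₁)) (Filter.Eventually.of_forall hptD)
          _ = (∫ ω, ℓ (⟪X ω, w⟫_ℝ * Y ω) ∂μ)
              + c₁ * ∫ ω, Real.exp (-(c₂ * R) * |⟪X ω, u⟫_ℝ|) ∂μ := by
              rw [integral_add (hInt w) (hexpInt.const_mul c₁), integral_const_mul]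
          _ ≤ (∫ ω, ℓ (⟪X ω, w⟫_ℝ * Y ω) ∂μ) + c₁ * a₂ / (c₂ * R) := by
              have h := hexpneg u hu (c₂ * R) (by positivity)
              have h2 : c₁ * ∫ ω, Real.exp (-(c₂ * R) * |⟪X ω, u⟫_ℝ|) ∂μ
                  ≤ c₁ * (a₂ / (c₂ * R)) := mul_le_mul_of_nonneg_left h hc₁.le
              rw [mul_div_assoc]
              linarith
  -- combination
  have hmain : ∀ R : ℝ, 0 < R → ∀ w, L wt ≤ L w + c₁ * a₂ / (c₂ * R) + ρ * (2 * β * R) := by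
    intro R hR w
    obtain ⟨hw'R, hw'L⟩ := (hD R hR w).choose_spec
    set w' := (hD R hR w).choose
    have h1 := hB w'
    have h2 := mul_le_mul_of_nonneg_left (hC w') hρ0.le
    have h3 := mul_le_mul_of_nonneg_left
      (mul_le_mul_of_nonneg_right hw'R hσ.le)
      (by positivity : (0:ℝ) ≤ ρ * (2 * Lc))
    rw [hβdef]
    nlinarith [h1, h2, h3, hw'L]
  -- choice of R
  set A : ℝ := c₁ * a₂ / c₂ with hAdef
  have hA : 0 < A := by positivity
  set B : ℝ := 2 * ρ * β with hBdef
  have hBpos : 0 < B := by positivity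
  set R : ℝ := Real.sqrt (A / B) with hRdef
  have hR : 0 < R := Real.sqrt_pos.mpr (div_pos hA hBpos)
  have hR2 : R ^ 2 = A / B := Real.sq_sqrt (div_pos hA hBpos).le
  have hkey : c₁ * a₂ / (c₂ * R) + ρ * (2 * β * R)
      ≤ Real.sqrt (8 * (Lc * Real.sqrt (a₁ / a₀)) * c₁ * a₂ / c₂) * Real.sqrt ρ := by
    have hAR : c₁ * a₂ / (c₂ * R) = B * R := by
      have hAeq : A = B * R * R := by
        rw [mul_assoc, ← sq, hR2]
        field_simp
      rw [div_mul_eq_div_div, ← hAdef, hAeq]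
      field_simp
    rw [hAR]
    have hlhs : B * R + ρ * (2 * β * R) = 2 * B * R := by rw [hBdef]; ring
    rw [hlhs]
    have hx : (0:ℝ) ≤ 8 * (Lc * Real.sqrt (a₁ / a₀)) * c₁ * a₂ / c₂ := by positivity
    rw [← Real.sqrt_mul hx]
    refine (Real.le_sqrt (by positivity) (by positivity)).mpr ?_
    have hsq2 : (2 * B * R) ^ 2 = 4 * B ^ 2 * R ^ 2 := by ring
    rw [hsq2, hR2]
    have e1 : 4 * B ^ 2 * (A / B) = 4 * A * B := by
      field_simp
    rw [e1, ← hσdef, hBdef, hβdef, hAdef]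
    exact le_of_eq (by ring)
  have hfin : ∀ w, L wt - Real.sqrt (8 * (Lc * Real.sqrt (a₁ / a₀)) * c₁ * a₂ / c₂)
      * Real.sqrt ρ ≤ L w := by
    intro w
    have := hmain R hR w
    linarith
  have hinf := le_ciInf hfin
  linarith
end

section
/- Suppose ℓ is nonnegative, nonincreasing, and satisfies ℓ(t) ≤ c₁e^{−c₂t} for t ≥ 0, and E[exp(−s|Xᵀu|)] ≤ a₂/s for all s > 0 and unit u. Then for any w with ‖w‖ > t > 0 and u = w/‖w‖, L(tu) − L(w) ≤ c₁a₂/(c₂t), where L(w) = E[ℓ(XᵀwY)] and Y ∈ {±1}. -/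
open MeasureTheory
open scoped InnerProductSpace

theorem stmt15 {Ω : Type*} [MeasurableSpace Ω] (μ : Measure Ω) [IsProbabilityMeasure μ]
    {d : ℕ} (X : Ω → EuclideanSpace ℝ (Fin d)) (Y : Ω → ℝ)
    (ℓ : ℝ → ℝ) (c₁ c₂ a₂ : ℝ) (hc₁ : 0 < c₁) (hc₂ : 0 < c₂) (ha₂ : 0 < a₂)
    (hℓpos : ∀ s, 0 ≤ ℓ s) (hmono : Antitone ℓ)
    (hdecay : ∀ s ≥ (0:ℝ), ℓ s ≤ c₁ * Real.exp (-c₂ * s))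
    (hX : AEMeasurable X μ) (hYmeas : Measurable Y)
    (hYval : ∀ ω, Y ω = 1 ∨ Y ω = -1)
    (hexpneg : ∀ u : EuclideanSpace ℝ (Fin d), ‖u‖ = 1 → ∀ s > (0:ℝ),
      ∫ ω, Real.exp (-s * |⟪X ω, u⟫_ℝ|) ∂μ ≤ a₂ / s)
    (hInt : ∀ v : EuclideanSpace ℝ (Fin d),
      Integrable (fun ω => ℓ (⟪X ω, v⟫_ℝ * Y ω)) μ)
    (w : EuclideanSpace ℝ (Fin d)) (t : ℝ) (ht : 0 < t) (hw : t < ‖w‖) :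
    (∫ ω, ℓ (⟪X ω, t • (‖w‖⁻¹ • w)⟫_ℝ * Y ω) ∂μ) - ∫ ω, ℓ (⟪X ω, w⟫_ℝ * Y ω) ∂μ
      ≤ c₁ * a₂ / (c₂ * t) := by
  have hwpos : (0:ℝ) < ‖w‖ := ht.trans hw
  set u : EuclideanSpace ℝ (Fin d) := ‖w‖⁻¹ • w with hu_def
  have hu : ‖u‖ = 1 := by
    rw [hu_def, norm_smul, norm_inv, norm_norm, inv_mul_cancel₀ hwpos.ne']
  -- inner product rewriting
  have hinner : ∀ ω, ⟪X ω, t • u⟫_ℝ = t * ⟪X ω, u⟫_ℝ := fun ω =>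
    real_inner_smul_right _ _ _
  have hinnerw : ∀ ω, ⟪X ω, w⟫_ℝ = ‖w‖ * ⟪X ω, u⟫_ℝ := by
    intro ω
    rw [hu_def, real_inner_smul_right]
    field_simp
  -- pointwise bound
  have hpt : ∀ ω, ℓ (⟪X ω, t • u⟫_ℝ * Y ω) - ℓ (⟪X ω, w⟫_ℝ * Y ω)
      ≤ c₁ * Real.exp (-(c₂ * t) * |⟪X ω, u⟫_ℝ|) := by
    intro ω
    set Z := ⟪X ω, u⟫_ℝ * Y ω with hZ
    have hZabs : |Z| = |⟪X ω, u⟫_ℝ| := by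
      rcases hYval ω with h | h <;> rw [hZ, h] <;> simp [abs_mul]
    rw [hinner, hinnerw, mul_assoc, mul_assoc, ← hZ]
    rcases le_or_gt Z 0 with hz | hz
    · have h1 : ℓ (t * Z) ≤ ℓ (‖w‖ * Z) := by
        apply hmono
        nlinarith
      have := Real.exp_pos (-(c₂ * t) * |⟪X ω, u⟫_ℝ|)
      nlinarith [hℓpos (t * Z)]
    · have h1 : ℓ (t * Z) ≤ c₁ * Real.exp (-c₂ * (t * Z)) :=
        hdecay _ (by positivity)
      have h2 : -c₂ * (t * Z) = -(c₂ * t) * |⟪X ω, u⟫_ℝ| := by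
        rw [← hZabs, abs_of_pos hz]; ring
      rw [h2] at h1
      have := hℓpos (‖w‖ * Z)
      linarith
  -- integrability of the exponential bound
  have hmeas : AEMeasurable (fun ω => Real.exp (-(c₂ * t) * |⟪X ω, u⟫_ℝ|)) μ := by
    exact Real.measurable_exp.comp_aemeasurable
      ((measurable_abs.comp_aemeasurable (hX.inner aemeasurable_const)).const_mul _)
  have hexp_int : Integrable (fun ω => Real.exp (-(c₂ * t) * |⟪X ω, u⟫_ℝ|)) μ := by
    apply (integrable_const (1:ℝ)).mono' hmeas.aestronglyMeasurable
    filter_upwards with ω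
    rw [Real.norm_eq_abs, abs_of_pos (Real.exp_pos _)]
    apply Real.exp_le_one_iff.mpr
    have h1 : (0:ℝ) ≤ |⟪X ω, u⟫_ℝ| := abs_nonneg _
    nlinarith [mul_nonneg (mul_pos hc₂ ht).le h1]
  have hst : 0 < c₂ * t := by positivity
  have hbound := hexpneg u hu (c₂ * t) hst
  have hsub : (∫ ω, ℓ (⟪X ω, t • u⟫_ℝ * Y ω) ∂μ) - ∫ ω, ℓ (⟪X ω, w⟫_ℝ * Y ω) ∂μ
      = ∫ ω, (ℓ (⟪X ω, t • u⟫_ℝ * Y ω) - ℓ (⟪X ω, w⟫_ℝ * Y ω)) ∂μ :=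
    (integral_sub (hInt (t • u)) (hInt w)).symm
  rw [hsub]
  calc ∫ ω, (ℓ (⟪X ω, t • u⟫_ℝ * Y ω) - ℓ (⟪X ω, w⟫_ℝ * Y ω)) ∂μ
      ≤ ∫ ω, c₁ * Real.exp (-(c₂ * t) * |⟪X ω, u⟫_ℝ|) ∂μ := by
        apply integral_mono ((hInt (t • u)).sub (hInt w)) (hexp_int.const_mul c₁) hpt
    _ = c₁ * ∫ ω, Real.exp (-(c₂ * t) * |⟪X ω, u⟫_ℝ|) ∂μ := integral_const_mul _ _
    _ ≤ c₁ * (a₂ / (c₂ * t)) := by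
        exact mul_le_mul_of_nonneg_left hbound hc₁.le
    _ = c₁ * a₂ / (c₂ * t) := by ring
end
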